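/- Fix an integer q ≥ 2 and integers K', m'', m' with 0 ≤ K' ≤ m'' ≤ m'. Then ∑_{r=K'}^{m''} P_r(m', m'') · P(r, K') = P(m'', K') · P(m', K'), as an identity of real numbers. -/
import Mathlib


open Finset

/-- `P(m,K) = ∏_{i=0}^{K-1} (1 - q^{i-m})`. -/
noncomputable def Pfr (q m K : ℕ) : ℝ :=
  ∏ i ∈ Finset.range K, (1 - (q : ℝ) ^ ((i : ℤ) - (m : ℤ)))

/-- The Gaussian binomial coefficient `[K; r]_q`. -/
noncomputable def gaussBinom (q K r : ℕ) : ℝ :=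
  ∏ i ∈ Finset.range r, (((q : ℝ) ^ (K - i) - 1) / ((q : ℝ) ^ (r - i) - 1))

/-- `P_r(m,K) = q^{-m(K-r)} · [K; r]_q · ∏_{i=0}^{r-1} (1 - q^{i-m})`. -/
noncomputable def Prk (q m K r : ℕ) : ℝ :=
  (q : ℝ) ^ (-(m : ℤ) * ((K : ℤ) - (r : ℤ))) * gaussBinom q K r *
    ∏ i ∈ Finset.range r, (1 - (q : ℝ) ^ ((i : ℤ) - (m : ℤ)))


noncomputable def Dfac (q : ℕ) (m : ℤ) (K : ℕ) : ℝ :=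
  ∏ i ∈ Finset.range K, ((q : ℝ) ^ (m - (i : ℤ)) - 1)

noncomputable def Zfac (q : ℕ) (m : ℤ) (K : ℕ) : ℝ :=
  ∏ i ∈ Finset.range K, (q : ℝ) ^ ((i : ℤ) - m)

lemma hc1 {q : ℕ} (hq : 2 ≤ q) : (1:ℝ) < (q:ℝ) := by
  exact_mod_cast Nat.lt_of_lt_of_le Nat.one_lt_two hq

lemma hc0 {q : ℕ} (hq : 2 ≤ q) : (q:ℝ) ≠ 0 := by
  have := hc1 hq; linarith

lemma Dfac_pos {q : ℕ} (hq : 2 ≤ q) (m : ℤ) (K : ℕ) (h : (K:ℤ) ≤ m) : 0 < Dfac q m K := by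
  apply Finset.prod_pos
  intro i hi
  have hi' : (0:ℤ) < m - i := by
    have := Finset.mem_range.mp hi; omega
  have := one_lt_zpow₀ (hc1 hq) hi'
  linarith

lemma Dfac_ne {q : ℕ} (hq : 2 ≤ q) (m : ℤ) (K : ℕ) (h : (K:ℤ) ≤ m) : Dfac q m K ≠ 0 :=
  (Dfac_pos hq m K h).ne'

lemma Pfr_eq {q : ℕ} (hq : 2 ≤ q) (m K : ℕ) :
    Pfr q m K = Zfac q (m:ℤ) K * Dfac q (m:ℤ) K := by
  unfold Pfr Zfac Dfac
  rw [← Finset.prod_mul_distrib]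
  refine Finset.prod_congr rfl fun i _ => ?_
  rw [mul_sub, mul_one, ← zpow_add₀ (hc0 hq)]
  norm_num

lemma gauss_eq {q : ℕ} (hq : 2 ≤ q) (K r : ℕ) (h : r ≤ K) :
    gaussBinom q K r = Dfac q (K:ℤ) r / Dfac q (r:ℤ) r := by
  unfold gaussBinom Dfac
  rw [← Finset.prod_div_distrib]
  refine Finset.prod_congr rfl fun i hi => ?_
  have hi' := Finset.mem_range.mp hi
  rw [← zpow_natCast (q:ℝ) (K - i), ← zpow_natCast (q:ℝ) (r - i),
    Nat.cast_sub (le_of_lt (lt_of_lt_of_le hi' h)), Nat.cast_sub (le_of_lt hi')]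

lemma Prk_eq {q : ℕ} (hq : 2 ≤ q) (m K r : ℕ) (h : r ≤ K) :
    Prk q m K r = (q:ℝ) ^ (-(m:ℤ) * ((K:ℤ) - (r:ℤ))) *
      (Dfac q (K:ℤ) r / Dfac q (r:ℤ) r) * (Zfac q (m:ℤ) r * Dfac q (m:ℤ) r) := by
  unfold Prk
  rw [gauss_eq hq K r h]
  congr 1
  exact Pfr_eq hq m r

lemma Dfac_add (q : ℕ) (x : ℤ) (K s : ℕ) :
    Dfac q ((K:ℤ) + x) (K + s) = Dfac q ((K:ℤ) + x) K * Dfac q x s := by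
  unfold Dfac
  rw [Finset.prod_range_add]
  congr 1
  refine Finset.prod_congr rfl fun i _ => ?_
  push_cast
  ring_nf

lemma Zfac_add (q : ℕ) (x : ℤ) (K s : ℕ) :
    Zfac q ((K:ℤ) + x) (K + s) = Zfac q ((K:ℤ) + x) K * Zfac q x s := by
  unfold Zfac
  rw [Finset.prod_range_add]
  congr 1
  refine Finset.prod_congr rfl fun i _ => ?_
  push_cast
  ring_nf

lemma Zfac_shift {q : ℕ} (hq : 2 ≤ q) (K : ℕ) (s b : ℤ) :
    Zfac q ((K:ℤ) + s) K = Zfac q ((K:ℤ) + b) K * (q:ℝ) ^ ((K:ℤ) * (b - s)) := by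
  unfold Zfac
  have h : (q:ℝ) ^ ((K:ℤ) * (b - s)) = ∏ _i ∈ Finset.range K, (q:ℝ) ^ (b - s) := by
    rw [Finset.prod_const, Finset.card_range, ← zpow_natCast ((q:ℝ) ^ (b - s)) K, ← zpow_mul]
    congr 1
    ring
  rw [h, ← Finset.prod_mul_distrib]
  refine Finset.prod_congr rfl fun i _ => ?_
  rw [← zpow_add₀ (hc0 hq)]
  congr 1
  ring

lemma termB {q : ℕ} (hq : 2 ≤ q) (K' s b a : ℕ) (hsb : s ≤ b) (hba : b ≤ a) :
    Prk q (K'+a) (K'+b) (K'+s) * Pfr q (K'+s) K' =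
      Pfr q (K'+b) K' * Pfr q (K'+a) K' * Prk q a b s := by
  have hc := hc0 hq
  rw [Prk_eq hq (K'+a) (K'+b) (K'+s) (by omega), Prk_eq hq a b s hsb,
    Pfr_eq hq (K'+s) K', Pfr_eq hq (K'+b) K', Pfr_eq hq (K'+a) K']
  push_cast
  rw [Dfac_add q (b:ℤ) K' s, Dfac_add q (a:ℤ) K' s, Dfac_add q (s:ℤ) K' s,
    Zfac_add q (a:ℤ) K' s, Zfac_shift hq K' (s:ℤ) (b:ℤ)]
  have h1 : Dfac q ((K':ℤ) + s) K' ≠ 0 := Dfac_ne hq _ _ (by omega)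
  have h2 : Dfac q (s:ℤ) s ≠ 0 := Dfac_ne hq _ _ (by omega)
  have hzz : ∀ e : ℤ, (q:ℝ) ^ e ≠ 0 := fun e => zpow_ne_zero e hc
  have hP : (q:ℝ) ^ (-((K':ℤ) + a) * ((K':ℤ) + b - ((K':ℤ) + s))) =
      (q:ℝ) ^ (-(a:ℤ) * ((b:ℤ) - s)) / (q:ℝ) ^ ((K':ℤ) * ((b:ℤ) - s)) := by
    rw [← zpow_sub₀ hc]
    congr 1
    ring
  rw [hP]
  field_simp

lemma gauss_diag {q : ℕ} (hq : 2 ≤ q) (n : ℕ) : gaussBinom q n n = 1 := by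
  unfold gaussBinom
  apply Finset.prod_eq_one
  intro i hi
  apply div_self
  have hi' := Finset.mem_range.mp hi
  have : 1 < (q:ℝ) ^ (n - i) := one_lt_pow₀ (hc1 hq) (by omega)
  linarith

lemma gauss_zero {q K r : ℕ} (h : K < r) : gaussBinom q K r = 0 := by
  unfold gaussBinom
  apply Finset.prod_eq_zero (Finset.mem_range.mpr h)
  simp [Nat.sub_self]

lemma Prk_top (q a b : ℕ) : Prk q a b (b+1) = 0 := by
  unfold Prk
  rw [gauss_zero (Nat.lt_succ_self b)]
  ring

lemma R1 {q : ℕ} (hq : 2 ≤ q) (a b j : ℕ) (hj : j ≤ b) :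
    Prk q a (b+1) (j+1) = (q:ℝ) ^ (((j:ℤ)+1) - (a:ℤ)) * Prk q a b (j+1) +
      (1 - (q:ℝ) ^ ((j:ℤ) - (a:ℤ))) * Prk q a b j := by
  have hc := hc0 hq
  rcases eq_or_lt_of_le hj with rfl | hjb
  · -- j = b
    rw [Prk_top]
    unfold Prk
    rw [gauss_diag hq, gauss_diag hq]
    rw [Finset.prod_range_succ]
    push_cast
    norm_num
    ring
  · -- j + 1 ≤ b
    rw [Prk_eq hq a (b+1) (j+1) (by omega), Prk_eq hq a b (j+1) (by omega),
      Prk_eq hq a b j (by omega)]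
    push_cast
    have hDb1 : Dfac q ((b:ℤ)+1) (j+1) =
        ((q:ℝ)^((j:ℤ)+1) * (q:ℝ)^((b:ℤ)-(j:ℤ)) - 1) * Dfac q (b:ℤ) j := by
      unfold Dfac
      rw [Finset.prod_range_succ', mul_comm]
      push_cast
      rw [← zpow_add₀ hc]
      congr 1
      · congr 1
        ring
      · refine Finset.prod_congr rfl fun i _ => ?_
        congr 2
        ring
    have hDj1 : Dfac q ((j:ℤ)+1) (j+1) = ((q:ℝ)^((j:ℤ)+1) - 1) * Dfac q (j:ℤ) j := by
      unfold Dfac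
      rw [Finset.prod_range_succ', mul_comm]
      have h1 : ∏ i ∈ Finset.range j, ((q:ℝ) ^ ((j:ℤ) + 1 - ((i+1:ℕ):ℤ)) - 1) =
          ∏ i ∈ Finset.range j, ((q:ℝ) ^ ((j:ℤ) - (i:ℤ)) - 1) :=
        Finset.prod_congr rfl fun i _ => by congr 2; push_cast; ring
      rw [h1]
      norm_num
    have hDb2 : Dfac q (b:ℤ) (j+1) = Dfac q (b:ℤ) j * ((q:ℝ)^((b:ℤ)-(j:ℤ)) - 1) := by
      unfold Dfac
      rw [Finset.prod_range_succ]
    have hZ : Zfac q (a:ℤ) (j+1) = Zfac q (a:ℤ) j * (q:ℝ)^((j:ℤ)-(a:ℤ)) := by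
      unfold Zfac
      rw [Finset.prod_range_succ]
    have hDa : Dfac q (a:ℤ) (j+1) = Dfac q (a:ℤ) j * ((q:ℝ)^((a:ℤ)-(j:ℤ)) - 1) := by
      unfold Dfac
      rw [Finset.prod_range_succ]
    have h1m : (1:ℝ) - (q:ℝ)^((j:ℤ)-(a:ℤ)) =
        (q:ℝ)^((j:ℤ)-(a:ℤ)) * ((q:ℝ)^((a:ℤ)-(j:ℤ)) - 1) := by
      rw [mul_sub, ← zpow_add₀ hc, mul_one]
      norm_num
    have hE1 : (q:ℝ)^(-(a:ℤ)*((b:ℤ)+1-((j:ℤ)+1))) = (q:ℝ)^(-(a:ℤ)*((b:ℤ)-(j:ℤ))) := by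
      congr 1
      ring
    have hE2 : (q:ℝ)^(((j:ℤ)+1)-(a:ℤ)) = (q:ℝ)^((j:ℤ)+1) / (q:ℝ)^(a:ℤ) :=
      zpow_sub₀ hc _ _
    have hE3 : (q:ℝ)^(-(a:ℤ)*((b:ℤ)-((j:ℤ)+1))) =
        (q:ℝ)^(-(a:ℤ)*((b:ℤ)-(j:ℤ))) * (q:ℝ)^(a:ℤ) := by
      rw [← zpow_add₀ hc]
      congr 1
      ring
    rw [hDb1, hDj1, hDb2, hZ, hDa, h1m, hE1, hE2, hE3]
    have n1 : Dfac q (j:ℤ) j ≠ 0 := Dfac_ne hq _ _ le_rfl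
    have n2 : (q:ℝ)^((j:ℤ)+1) - 1 ≠ 0 := by
      have : 1 < (q:ℝ)^((j:ℤ)+1) := one_lt_zpow₀ (hc1 hq) (by omega)
      linarith
    have n3 : (q:ℝ)^(a:ℤ) ≠ 0 := zpow_ne_zero _ hc
    field_simp
    ring

lemma R0 {q : ℕ} (hq : 2 ≤ q) (a b : ℕ) :
    Prk q a (b+1) 0 = (q:ℝ) ^ ((0:ℤ) - (a:ℤ)) * Prk q a b 0 := by
  unfold Prk gaussBinom
  simp only [Finset.range_zero, Finset.prod_empty, mul_one]
  rw [← zpow_add₀ (hc0 hq)]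
  congr 1
  push_cast
  ring

noncomputable def Gaux (q a b i : ℕ) : ℝ := (q:ℝ) ^ ((i:ℤ) - (a:ℤ)) * Prk q a b i

lemma sumA {q : ℕ} (hq : 2 ≤ q) (a b : ℕ) :
    ∑ j ∈ Finset.range (b+1), Prk q a b j = 1 := by
  induction b with
  | zero =>
    simp [Prk, gaussBinom]
  | succ b ih =>
    have step : ∀ j ∈ Finset.range (b+1),
        Prk q a (b+1) (j+1) = Gaux q a b (j+1) + (Prk q a b j - Gaux q a b j) := by
      intro j hj
      rw [R1 hq a b j (by have := Finset.mem_range.mp hj; omega)]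
      unfold Gaux
      push_cast
      ring
    rw [Finset.sum_range_succ' (fun j => Prk q a (b+1) j) (b+1),
      Finset.sum_congr rfl step, Finset.sum_add_distrib, Finset.sum_sub_distrib]
    have hshift : ∑ j ∈ Finset.range (b+1), Gaux q a b (j+1) =
        (∑ j ∈ Finset.range (b+1), Gaux q a b j) - Gaux q a b 0 := by
      have h2 : ∑ j ∈ Finset.range (b+2), Gaux q a b j =
          (∑ j ∈ Finset.range (b+1), Gaux q a b (j+1)) + Gaux q a b 0 :=
        Finset.sum_range_succ' (Gaux q a b) (b+1)
      have h3 : ∑ j ∈ Finset.range (b+2), Gaux q a b j =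
          (∑ j ∈ Finset.range (b+1), Gaux q a b j) + Gaux q a b (b+1) :=
        Finset.sum_range_succ (Gaux q a b) (b+1)
      have h4 : Gaux q a b (b+1) = 0 := by
        unfold Gaux
        rw [Prk_top, mul_zero]
      rw [h4, add_zero] at h3
      rw [h3] at h2
      linarith
    rw [hshift, ih, R0 hq a b]
    have h5 : Gaux q a b 0 = (q:ℝ) ^ ((0:ℤ) - (a:ℤ)) * Prk q a b 0 := by
      unfold Gaux
      norm_num
    rw [h5]
    ring

lemma sum_Icc_shift (f : ℕ → ℝ) (K b : ℕ) :
    ∑ r ∈ Finset.Icc K (K+b), f r = ∑ j ∈ Finset.range (b+1), f (K+j) := by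
  induction b with
  | zero => simp
  | succ b ih =>
    have h : K + (b+1) = (K + b) + 1 := by omega
    rw [h, Finset.sum_Icc_succ_top (by omega), ih,
      Finset.sum_range_succ (fun j => f (K + j)) (b+1), ← h]

/-- for an integer `q ≥ 2` and `0 ≤ K' ≤ m'' ≤ m'`,
`∑_{r=K'}^{m''} P_r(m', m'') · P(r, K') = P(m'', K') · P(m', K')`. -/
theorem sum_identity (q K' m'' m' : ℕ) (hq : 2 ≤ q) (h1 : K' ≤ m'') (h2 : m'' ≤ m') :
    ∑ r ∈ Finset.Icc K' m'', Prk q m' m'' r * Pfr q r K' =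
      Pfr q m'' K' * Pfr q m' K' := by
  obtain ⟨b, rfl⟩ : ∃ b, m'' = K' + b := ⟨m'' - K', by omega⟩
  obtain ⟨e, rfl⟩ : ∃ e, m' = K' + (b + e) := ⟨m' - (K' + b), by omega⟩
  rw [sum_Icc_shift]
  have hterm : ∀ j ∈ Finset.range (b+1),
      Prk q (K'+(b+e)) (K'+b) (K'+j) * Pfr q (K'+j) K' =
      Pfr q (K'+b) K' * Pfr q (K'+(b+e)) K' * Prk q (b+e) b j := fun j hj =>
    termB hq K' j b (b+e) (by have := Finset.mem_range.mp hj; omega) (by omega)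
  rw [Finset.sum_congr rfl hterm, ← Finset.mul_sum, sumA hq (b+e) b, mul_one]
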